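/- arXiv:1912.01761 — 7 statements merged into one kernel-verified Lean document; each statement's English description precedes it below -/
import Mathlib

section
/- Let z1, z2, z3, z4 be complex numbers with z1 + z2 + z3 - z4 = 0 and z1 z2 z3 z4 ≠ 0. Define a1(t) = (z2 z4 + z3 t)/(z1 - t), a2(t) = (z1 z4 - z3 t)/(z2 + t), a3(t) = t. Then for any t, s in the domain (t ≠ z1, s ≠ z1, t ≠ -z2, s ≠ -z2, s ≠ 0, t ≠ 0), setting t' = -z1 z2 z4/(z3 s) and s' = -z1 z2 z4/(z3 t), we have a_k(t)/a_k(s) = a_k(t')/a_k(s') for k = 1, 2, 3. -/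
/-!
Each of `a₁, a₂, a₃` is a fractional linear function `a` with `a (σ x) * a x` constant for the
involution `σ x = -z₁z₂z₄ / (z₃ x)`. Writing `a (σ x) = C / a x`, both sides of the claimed
identity become the same ratio, since `(C / a s) / (C / a t) = a t / a s`.
-/

theorem div_eq_div_of_apply_eq_div {K : Type*} [Field K] {f σ : K → K} {C t s : K} (hC : C ≠ 0)
    (ht : f (σ t) = C / f t) (hs : f (σ s) = C / f s) :
    f t / f s = f (σ s) / f (σ t) := by
  rw [hs, ht, div_div_div_cancel_left' _ _ hC]

/-- No case split on the zeros of `p + q x` or `r - x` is needed: they are swapped by the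
involution, and both sides are then `0` by the convention `y / 0 = 0`. -/
theorem add_mul_div_sub_neg_div_mul {K : Type*} [Field K] {p q r x : K} (hq : q ≠ 0)
    (hr : r ≠ 0) (hx : x ≠ 0) :
    (p + q * (-(r * p) / (q * x))) / (r - -(r * p) / (q * x)) =
      -(p * q / r) / ((p + q * x) / (r - x)) := by
  have hnum : p + q * (-(r * p) / (q * x)) = -(p / x) * (r - x) := by
    field_simp
    ring
  have hden : r - -(r * p) / (q * x) = r / (q * x) * (p + q * x) := by
    field_simp
    ring
  have hconst : -(p / x) / (r / (q * x)) = -(p * q / r) := by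
    field_simp
  rw [hnum, hden, mul_div_mul_comm, hconst, div_eq_mul_inv _ ((p + q * x) / (r - x)), inv_div]

theorem stmt_0_general (z1 z2 z3 z4 : ℂ)
    (hz : z1 * z2 * z3 * z4 ≠ 0)
    (a1 : ℂ → ℂ) (a2 : ℂ → ℂ) (a3 : ℂ → ℂ)
    (ha1 : ∀ t, a1 t = (z2 * z4 + z3 * t) / (z1 - t))
    (ha2 : ∀ t, a2 t = (z1 * z4 - z3 * t) / (z2 + t))
    (ha3 : ∀ t, a3 t = t)
    (t s : ℂ)
    (hs0 : s ≠ 0) (ht0 : t ≠ 0)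
    (t' s' : ℂ) (ht' : t' = -(z1 * z2 * z4) / (z3 * s))
    (hs' : s' = -(z1 * z2 * z4) / (z3 * t)) :
    a1 t / a1 s = a1 t' / a1 s' ∧
    a2 t / a2 s = a2 t' / a2 s' ∧
    a3 t / a3 s = a3 t' / a3 s' := by
  obtain ⟨⟨⟨h1, h2⟩, h3⟩, h4⟩ : ((z1 ≠ 0 ∧ z2 ≠ 0) ∧ z3 ≠ 0) ∧ z4 ≠ 0 := by
    simpa only [mul_ne_zero_iff] using hz
  set σ : ℂ → ℂ := fun x ↦ -(z1 * z2 * z4) / (z3 * x)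
  have hσ1 : ∀ x ≠ 0, a1 (σ x) = -(z2 * z4 * z3 / z1) / a1 x := fun x hx ↦ by
    rw [show σ x = -(z1 * (z2 * z4)) / (z3 * x) by ring, ha1, ha1]
    exact add_mul_div_sub_neg_div_mul h3 h1 hx
  have ha2' : ∀ x, a2 x = (-(z1 * z4) + z3 * x) / (-z2 - x) := fun x ↦ by
    rw [ha2, ← neg_div_neg_eq]
    ring
  have hσ2 : ∀ x ≠ 0, a2 (σ x) = -(-(z1 * z4) * z3 / -z2) / a2 x := fun x hx ↦ by
    rw [show σ x = -(-z2 * -(z1 * z4)) / (z3 * x) by ring, ha2', ha2']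
    exact add_mul_div_sub_neg_div_mul h3 (neg_ne_zero.2 h2) hx
  have hσ3 : ∀ x, a3 (σ x) = -(z1 * z2 * z4) / z3 / a3 x := fun x ↦ by
    simp only [ha3, σ, div_div]
  subst ht' hs'
  exact ⟨div_eq_div_of_apply_eq_div (by simp [*]) (hσ1 t ht0) (hσ1 s hs0),
    div_eq_div_of_apply_eq_div (by simp [*]) (hσ2 t ht0) (hσ2 s hs0),
    div_eq_div_of_apply_eq_div (by simp [*]) (hσ3 t) (hσ3 s)⟩

theorem stmt_0 (z1 z2 z3 z4 : ℂ)
    (hsum : z1 + z2 + z3 - z4 = 0) (hz : z1 * z2 * z3 * z4 ≠ 0)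
    (a1 : ℂ → ℂ) (a2 : ℂ → ℂ) (a3 : ℂ → ℂ)
    (ha1 : ∀ t, a1 t = (z2 * z4 + z3 * t) / (z1 - t))
    (ha2 : ∀ t, a2 t = (z1 * z4 - z3 * t) / (z2 + t))
    (ha3 : ∀ t, a3 t = t)
    (t s : ℂ) (ht1 : t ≠ z1) (hs1 : s ≠ z1) (ht2 : t ≠ -z2) (hs2 : s ≠ -z2)
    (hs0 : s ≠ 0) (ht0 : t ≠ 0)
    (t' s' : ℂ) (ht' : t' = -(z1 * z2 * z4) / (z3 * s))
    (hs' : s' = -(z1 * z2 * z4) / (z3 * t)) :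
    a1 t / a1 s = a1 t' / a1 s' ∧
    a2 t / a2 s = a2 t' / a2 s' ∧
    a3 t / a3 s = a3 t' / a3 s' :=
  stmt_0_general z1 z2 z3 z4 hz a1 a2 a3 ha1 ha2 ha3 t s hs0 ht0 t' s' ht' hs'
end

section
/- Let δ1 > 0 and define A1(T) = max(-δ1, T) - max(-2δ1, T), A2(T) = T - max(T, -δ1), A3(T) = max(T, -δ1) for T ∈ ℝ. Then the dispersion relation A3(T) - 2A1(T) - A2(T) = A3(S) - 2A1(S) - A2(S) is equivalent to |T + 2δ1| = |S + 2δ1|. -/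
theorem stmt_6 (δ1 : ℝ) (hδ1 : 0 < δ1)
    (A1 A2 A3 : ℝ → ℝ)
    (hA1 : ∀ T, A1 T = max (-δ1) T - max (-(2 * δ1)) T)
    (hA2 : ∀ T, A2 T = T - max T (-δ1))
    (hA3 : ∀ T, A3 T = max T (-δ1))
    (T S : ℝ) :
    (A3 T - 2 * A1 T - A2 T = A3 S - 2 * A1 S - A2 S) ↔
      |T + 2 * δ1| = |S + 2 * δ1| := by
  have key : ∀ X : ℝ, A3 X - 2 * A1 X - A2 X = |X + 2 * δ1| - 2 * δ1 := by
    intro X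
    rw [hA1, hA2, hA3, max_comm (-δ1) X]
    rcases le_total X (-(2*δ1)) with h | h
    · rw [max_eq_left h, max_eq_right (by linarith), abs_of_nonpos (by linarith)]
      ring
    · rw [max_eq_right h, abs_of_nonneg (by linarith)]
      rcases le_total X (-δ1) with h2 | h2
      · rw [max_eq_right h2]; ring
      · rw [max_eq_left h2]; ring
  rw [key, key]
  constructor <;> intro h <;> linarith
end

section
/- Let δ1 > 0, T ∈ ℝ, and S = -T - 4δ1 (so T ≠ S when T ≠ -2δ1). With A1(T) = max(-δ1, T) - max(-2δ1, T) and A3(T) = max(T, -δ1), set Ω = A3(T) - A3(S) - A1(T) + A1(S) and K = A1(T) - A1(S). Then Ω = T + 2δ1 and K = (|Ω - δ1| - |Ω + δ1|)/2. -/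
set_option maxHeartbeats 1600000


theorem stmt_7 (δ1 : ℝ) (hδ1 : 0 < δ1) (T S : ℝ) (hS : S = -T - 4 * δ1)
    (A1 A3 : ℝ → ℝ)
    (hA1 : ∀ T, A1 T = max (-δ1) T - max (-(2 * δ1)) T)
    (hA3 : ∀ T, A3 T = max T (-δ1))
    (Ω K : ℝ)
    (hΩ : Ω = A3 T - A3 S - A1 T + A1 S)
    (hK : K = A1 T - A1 S) :
    Ω = T + 2 * δ1 ∧ K = (|Ω - δ1| - |Ω + δ1|) / 2 := by
  have hΩ' : Ω = T + 2 * δ1 := by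
    rw [hΩ, hA1 T, hA1 S, hA3 T, hA3 S, hS]
    simp only [max_def]
    split_ifs <;> linarith
  refine ⟨hΩ', ?_⟩
  rw [hK, hA1 T, hA1 S, hS, hΩ']
  simp only [max_def]
  split_ifs <;>
    rcases abs_cases (T + 2 * δ1 - δ1) with ⟨e1, l1⟩ | ⟨e1, l1⟩ <;>
    rcases abs_cases (T + 2 * δ1 + δ1) with ⟨e2, l2⟩ | ⟨e2, l2⟩ <;>
    rw [e1, e2] <;> linarith
end

section
/- Let 0 < δ1 < δ2 be reals and define A1(T) = max(T - δ1, -δ2) + δ1, A3(T) = T - δ1 - max(0, T). Fix T ∈ ℝ and set S = -T + δ1 - δ2 - max(T - δ1, 0) - (1/2)max(-T - δ2, 0). Define P = A1(T) - A1(S) and Q = A3(T) - A3(S) - A1(T) + A1(S). Then Q = max(0, P - δ2) + min(0, P + δ2). -/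
set_option maxHeartbeats 1000000 in
theorem stmt_8 (δ1 δ2 : ℝ) (hδ1 : 0 < δ1) (hδ12 : δ1 < δ2)
    (A1 A3 : ℝ → ℝ)
    (hA1 : ∀ T, A1 T = max (T - δ1) (-δ2) + δ1)
    (hA3 : ∀ T, A3 T = T - δ1 - max 0 T)
    (T S : ℝ)
    (hS : S = -T + δ1 - δ2 - max (T - δ1) 0 - (1 / 2) * max (-T - δ2) 0)
    (P Q : ℝ)
    (hP : P = A1 T - A1 S)
    (hQ : Q = A3 T - A3 S - A1 T + A1 S) :
    Q = max 0 (P - δ2) + min 0 (P + δ2) := by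
  rw [hA1, hA1] at hP; rw [hA1, hA1, hA3, hA3] at hQ
  rcases max_cases (T - δ1) 0 with ⟨e5, l5⟩ | ⟨e5, l5⟩ <;>
  rcases max_cases (-T - δ2) 0 with ⟨e6, l6⟩ | ⟨e6, l6⟩ <;>
  rw [e5, e6] at hS <;>
  rcases max_cases (T - δ1) (-δ2) with ⟨e1, l1⟩ | ⟨e1, l1⟩ <;>
  rcases max_cases (S - δ1) (-δ2) with ⟨e2, l2⟩ | ⟨e2, l2⟩ <;>
  rcases max_cases 0 T with ⟨e3, l3⟩ | ⟨e3, l3⟩ <;>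
  rcases max_cases 0 S with ⟨e4, l4⟩ | ⟨e4, l4⟩ <;>
  rw [e1, e2] at hP <;>
  rw [e1, e2, e3, e4] at hQ <;>
  rcases max_cases 0 (P - δ2) with ⟨f1, g1⟩ | ⟨f1, g1⟩ <;>
  rcases min_cases 0 (P + δ2) with ⟨f2, g2⟩ | ⟨f2, g2⟩ <;>
  rw [f1, f2] <;>
  linarith
end

section
/- Let δ1 > 0, and let Ω, C ∈ ℝ with K = (|Ω - δ1| - |Ω + δ1|)/2. Define F(m, n) = max(0, Ω m + K n + C) for m, n ∈ ℤ. Then for any δ2 sufficiently large (in particular δ2 ≥ 2δ1 + 2|Ω|), F satisfies the ultradiscrete bilinear equation F(m+1, n+1) + F(m-1, n) = max( F(m, n+1) + F(m, n), F(m+1, n) + F(m-1, n+1) - δ1, F(m, n+2) + F(m, n-1) - δ2 ) for all m, n ∈ ℤ. -/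
lemma le_sum (x y c : ℝ) (h : c ≤ 0 ∨ c ≤ x ∨ c ≤ y ∨ c ≤ x + y) :
    c ≤ max 0 x + max 0 y := by
  have h1 : (0:ℝ) ≤ max 0 x := le_max_left _ _
  have h2 : x ≤ max 0 x := le_max_right _ _
  have h3 : (0:ℝ) ≤ max 0 y := le_max_left _ _
  have h4 : y ≤ max 0 y := le_max_right _ _
  rcases h with h|h|h|h <;> linarith

lemma sum_le (x y c : ℝ) (h0 : 0 ≤ c) (hx : x ≤ c) (hy : y ≤ c)
    (hxy : x + y ≤ c) : max 0 x + max 0 y ≤ c := by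
  simp only [max_def]
  split_ifs <;> linarith

lemma key (δ1 δ2 Ω K a : ℝ) (hδ1 : 0 < δ1)
    (hK : K = (|Ω - δ1| - |Ω + δ1|) / 2)
    (hδ2 : δ2 ≥ 2 * δ1 + 2 * |Ω|) :
    max 0 (a+Ω+K) + max 0 (a-Ω) =
      max (max 0 (a+K) + max 0 a)
        (max (max 0 (a+Ω) + max 0 (a-Ω+K) - δ1)
          (max 0 (a+2*K) + max 0 (a-K) - δ2)) := by
  have f3a : -δ1 ≤ K := by
    rw [hK]; rcases abs_cases (Ω - δ1) with ⟨h1,h1'⟩|⟨h1,h1'⟩ <;>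
      rcases abs_cases (Ω + δ1) with ⟨h2,h2'⟩|⟨h2,h2'⟩ <;> linarith
  have f3b : K ≤ δ1 := by
    rw [hK]; rcases abs_cases (Ω - δ1) with ⟨h1,h1'⟩|⟨h1,h1'⟩ <;>
      rcases abs_cases (Ω + δ1) with ⟨h2,h2'⟩|⟨h2,h2'⟩ <;> linarith
  have g1 : -δ1 ≤ Ω → -Ω ≤ K := by
    intro h; rw [hK]; rcases abs_cases (Ω - δ1) with ⟨h1,h1'⟩|⟨h1,h1'⟩ <;>
      rcases abs_cases (Ω + δ1) with ⟨h2,h2'⟩|⟨h2,h2'⟩ <;> linarith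
  have g2 : Ω ≤ δ1 → K ≤ -Ω := by
    intro h; rw [hK]; rcases abs_cases (Ω - δ1) with ⟨h1,h1'⟩|⟨h1,h1'⟩ <;>
      rcases abs_cases (Ω + δ1) with ⟨h2,h2'⟩|⟨h2,h2'⟩ <;> linarith
  have g3 : Ω ≤ -δ1 → δ1 ≤ K := by
    intro h; rw [hK]; rcases abs_cases (Ω - δ1) with ⟨h1,h1'⟩|⟨h1,h1'⟩ <;>
      rcases abs_cases (Ω + δ1) with ⟨h2,h2'⟩|⟨h2,h2'⟩ <;> linarith
  have g4 : δ1 ≤ Ω → K ≤ -δ1 := by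
    intro h; rw [hK]; rcases abs_cases (Ω - δ1) with ⟨h1,h1'⟩|⟨h1,h1'⟩ <;>
      rcases abs_cases (Ω + δ1) with ⟨h2,h2'⟩|⟨h2,h2'⟩ <;> linarith
  have hOa : Ω ≤ |Ω| := le_abs_self Ω
  have hOb : -|Ω| ≤ Ω := neg_abs_le Ω
  set L := max 0 (a+Ω+K) + max 0 (a-Ω) with hL
  apply le_antisymm
  · -- L ≤ RHS
    set R1 := max 0 (a+K) + max 0 a with hR1
    set R2 := max 0 (a+Ω) + max 0 (a-Ω+K) with hR2
    set R3 := max 0 (a+2*K) + max 0 (a-K) with hR3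
    have hm1 : R1 ≤ max R1 (max (R2 - δ1) (R3 - δ2)) := le_max_left _ _
    have hm2 : R2 - δ1 ≤ max (R2 - δ1) (R3 - δ2) := le_max_left _ _
    have hm3 : max (R2 - δ1) (R3 - δ2) ≤ max R1 (max (R2 - δ1) (R3 - δ2)) :=
      le_max_right _ _
    apply sum_le
    · have : (0:ℝ) ≤ R1 := le_sum _ _ _ (Or.inl le_rfl)
      linarith
    · -- a+Ω+K ≤ RHS
      rcases le_total δ1 Ω with h|h
      · have hk := g4 h
        have : a+Ω+K+δ1 ≤ R2 := le_sum _ _ _ (Or.inr (Or.inl (by linarith)))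
        linarith
      · have hk := g2 h
        have : a+Ω+K ≤ R1 := le_sum _ _ _ (Or.inr (Or.inr (Or.inl (by linarith))))
        linarith
    · -- a-Ω ≤ RHS
      rcases le_total Ω (-δ1) with h|h
      · have hk := g3 h
        have : a-Ω+δ1 ≤ R2 := le_sum _ _ _ (Or.inr (Or.inr (Or.inl (by linarith))))
        linarith
      · have hk := g1 h
        rcases le_total 0 Ω with h'|h'
        · have : a-Ω ≤ R1 := le_sum _ _ _ (Or.inr (Or.inr (Or.inl (by linarith))))
          linarith
        · have : a-Ω ≤ R1 := le_sum _ _ _ (Or.inr (Or.inl (by linarith)))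
          linarith
    · -- (a+Ω+K)+(a-Ω) = 2a+K ≤ RHS
      have : (a+Ω+K)+(a-Ω) ≤ R1 := le_sum _ _ _ (Or.inr (Or.inr (Or.inr (by linarith))))
      linarith
  · -- RHS ≤ L
    have hL0 : (0:ℝ) ≤ L := le_sum _ _ _ (Or.inl le_rfl)
    have hLp : a+Ω+K ≤ L := le_sum _ _ _ (Or.inr (Or.inl le_rfl))
    have hLq : a-Ω ≤ L := le_sum _ _ _ (Or.inr (Or.inr (Or.inl le_rfl)))
    have hLs : (a+Ω+K)+(a-Ω) ≤ L := le_sum _ _ _ (Or.inr (Or.inr (Or.inr le_rfl)))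
    apply max_le
    · -- R1 ≤ L
      apply sum_le _ _ _ hL0
      · rcases le_total 0 Ω with h|h
        · linarith
        · have hk := g2 (by linarith)
          linarith
      · rcases le_total 0 Ω with h|h
        · have hk := g1 (by linarith)
          linarith
        · linarith
      · linarith
    · apply max_le
      · -- R2 - δ1 ≤ L
        have : max 0 (a+Ω) + max 0 (a-Ω+K) ≤ L + δ1 := by
          apply sum_le <;> linarith
        linarith
      · -- R3 - δ2 ≤ L
        have : max 0 (a+2*K) + max 0 (a-K) ≤ L + δ2 := by
          apply sum_le <;> linarith
        linarith

theorem stmt_9 (δ1 δ2 Ω C K : ℝ) (hδ1 : 0 < δ1)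
    (hK : K = (|Ω - δ1| - |Ω + δ1|) / 2)
    (hδ2 : δ2 ≥ 2 * δ1 + 2 * |Ω|)
    (F : ℤ → ℤ → ℝ)
    (hF : ∀ m n : ℤ, F m n = max 0 (Ω * (m : ℝ) + K * (n : ℝ) + C)) :
    ∀ m n : ℤ,
      F (m + 1) (n + 1) + F (m - 1) n =
        max (F m (n + 1) + F m n)
          (max (F (m + 1) n + F (m - 1) (n + 1) - δ1)
            (F m (n + 2) + F m (n - 1) - δ2)) := by
  intro m n
  have h := key δ1 δ2 Ω K (Ω * (m:ℝ) + K * (n:ℝ) + C) hδ1 hK hδ2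
  simp only [hF]
  push_cast
  rw [show Ω * ((m:ℝ)+1) + K * ((n:ℝ)+1) + C = (Ω*m+K*n+C)+Ω+K by ring,
      show Ω * ((m:ℝ)-1) + K * (n:ℝ) + C = (Ω*m+K*n+C)-Ω by ring,
      show Ω * (m:ℝ) + K * ((n:ℝ)+1) + C = (Ω*m+K*n+C)+K by ring,
      show Ω * ((m:ℝ)+1) + K * (n:ℝ) + C = (Ω*m+K*n+C)+Ω by ring,
      show Ω * ((m:ℝ)-1) + K * ((n:ℝ)+1) + C = (Ω*m+K*n+C)-Ω+K by ring,
      show Ω * (m:ℝ) + K * ((n:ℝ)+2) + C = (Ω*m+K*n+C)+2*K by ring,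
      show Ω * (m:ℝ) + K * ((n:ℝ)-1) + C = (Ω*m+K*n+C)-K by ring]
  exact h
end

section
/- Let 0 < δ1 < δ2, P, C ∈ ℝ, and Q = max(0, P - δ2) + min(0, P + δ2). Define F_n^m = F(m, n) = max(0, Q m + P n + C) for m, n ∈ ℤ. Then F_{n+1}^{m+1} + F_n^{m-1} = max( F_{n+1}^m + F_n^m, F_n^{m+1} + F_{n+1}^{m-1} - δ1, F_{n+2}^m + F_{n-1}^m - δ2 ) for all m, n ∈ ℤ. -/
lemma stmt_10_key (δ1 δ2 P Q x : ℝ) (hδ1 : 0 < δ1) (hδ12 : δ1 < δ2)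
    (hQ : Q = max 0 (P - δ2) + min 0 (P + δ2)) :
    max 0 (x + Q + P) + max 0 (x - Q) =
      max (max 0 (x + P) + max 0 x)
        (max (max 0 (x + Q) + max 0 (x + P - Q) - δ1)
          (max 0 (x + 2 * P) + max 0 (x - P) - δ2)) := by
  rcases le_total P (-δ2) with hP | hP
  · have hQ' : Q = P + δ2 := by
      rw [hQ, max_eq_left (by linarith), min_eq_right (by linarith)]; ring
    subst hQ'
    apply le_antisymm
    · rcases le_total x (P + δ2) with hx | hx
      · refine le_trans ?_ (le_max_left _ _)
        simp only [max_def]; split_ifs <;> linarith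
      · rcases le_total x (-2 * P - δ2) with hx2 | hx2
        · refine le_trans ?_ (le_max_right _ _)
          refine le_trans ?_ (le_max_right _ _)
          simp only [max_def]; split_ifs <;> linarith
        · refine le_trans ?_ (le_max_left _ _)
          simp only [max_def]; split_ifs <;> linarith
    · refine max_le ?_ (max_le ?_ ?_) <;>
        (simp only [max_def]; split_ifs <;> linarith)
  · rcases le_total δ2 P with hP2 | hP2
    · have hQ' : Q = P - δ2 := by
        rw [hQ, max_eq_right (by linarith), min_eq_left (by linarith)]; ring
      subst hQ'
      apply le_antisymm
      · rcases le_total x (δ2 - 2 * P) with hx | hx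
        · refine le_trans ?_ (le_max_left _ _)
          simp only [max_def]; split_ifs <;> linarith
        · rcases le_total x (P - δ2) with hx2 | hx2
          · refine le_trans ?_ (le_max_right _ _)
            refine le_trans ?_ (le_max_right _ _)
            simp only [max_def]; split_ifs <;> linarith
          · refine le_trans ?_ (le_max_left _ _)
            simp only [max_def]; split_ifs <;> linarith
      · refine max_le ?_ (max_le ?_ ?_) <;>
          (simp only [max_def]; split_ifs <;> linarith)
    · have hQ' : Q = 0 := by
        rw [hQ, max_eq_left (by linarith), min_eq_left (by linarith)]; ring
      subst hQ'
      apply le_antisymm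
      · refine le_trans ?_ (le_max_left _ _)
        simp only [max_def]; split_ifs <;> linarith
      · refine max_le ?_ (max_le ?_ ?_) <;>
          (simp only [max_def]; split_ifs <;> linarith)

theorem stmt_10 (δ1 δ2 P C Q : ℝ) (hδ1 : 0 < δ1) (hδ12 : δ1 < δ2)
    (hQ : Q = max 0 (P - δ2) + min 0 (P + δ2))
    (F : ℤ → ℤ → ℝ)
    (hF : ∀ m n : ℤ, F m n = max 0 (Q * (m : ℝ) + P * (n : ℝ) + C)) :
    ∀ m n : ℤ,
      F (m + 1) (n + 1) + F (m - 1) n =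
        max (F m (n + 1) + F m n)
          (max (F (m + 1) n + F (m - 1) (n + 1) - δ1)
            (F m (n + 2) + F m (n - 1) - δ2)) := by
  intro m n
  have key := stmt_10_key δ1 δ2 P Q (Q * (m : ℝ) + P * (n : ℝ) + C) hδ1 hδ12 hQ
  simp only [hF]
  push_cast
  rw [show Q * ((m : ℝ) + 1) + P * ((n : ℝ) + 1) + C
      = (Q * m + P * n + C) + Q + P by ring,
    show Q * ((m : ℝ) - 1) + P * (n : ℝ) + C
      = (Q * m + P * n + C) - Q by ring,
    show Q * (m : ℝ) + P * ((n : ℝ) + 1) + C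
      = (Q * m + P * n + C) + P by ring,
    show Q * ((m : ℝ) + 1) + P * (n : ℝ) + C
      = (Q * m + P * n + C) + Q by ring,
    show Q * ((m : ℝ) - 1) + P * ((n : ℝ) + 1) + C
      = (Q * m + P * n + C) + P - Q by ring,
    show Q * (m : ℝ) + P * ((n : ℝ) + 2) + C
      = (Q * m + P * n + C) + 2 * P by ring,
    show Q * (m : ℝ) + P * ((n : ℝ) - 1) + C
      = (Q * m + P * n + C) - P by ring]
  exact key
end

section
/- Let 0 < d2 < d1 < 1, set z1 = d1, z2 = d2, z3 = 1 - d2, z4 = 1 + d1, and suppose τ : ℤ³ → ℂ satisfies the generalized discrete BKP equation z1 τ(p+1,q,r) τ(p,q+1,r+1) + z2 τ(p,q+1,r) τ(p+1,q,r+1) + z3 τ(p,q,r+1) τ(p+1,q+1,r) - z4 τ(p,q,r) τ(p+1,q+1,r+1) = 0 for all p, q, r ∈ ℤ. Define τ̂(l, m, n) = τ(n - m - 2l, -l, m + l), and assume τ̂(l+1, m, n) = τ̂(l, m, n) for all l, m, n. Then f(m, n) := τ̂(0, m, n) satisfies (1 + d1) f(m-1, n) f(m+1, n+1) = d1 f(m+1,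 n) f(m-1, n+1) + d2 f(m, n-1) f(m, n+2) + (1 - d2) f(m, n) f(m, n+1) for all m, n ∈ ℤ. -/
/-!
Since `τ̂` does not depend on `l`, evaluating it at `l = -q` gives
`τ p q r = f (r + q) (p + r - q)`. In these coordinates the BKP equation at the point
`(n - m + 1, 0, m - 1)` is exactly the asserted bilinear equation for `f`.
-/

lemma eq_apply_zero_of_apply_add_one {α : Type*} {g : ℤ → α} (hg : ∀ l, g (l + 1) = g l)
    (l : ℤ) : g l = g 0 := by
  simpa using Function.Periodic.int_mul_eq (c := 1) hg l

lemma apply_eq_reduced_of_apply_add_one {α : Type*} (τ : ℤ → ℤ → ℤ → α)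
    (τhat : ℤ → ℤ → ℤ → α) (hτhat : ∀ l m n, τhat l m n = τ (n - m - 2 * l) (-l) (m + l))
    (hred : ∀ l m n, τhat (l + 1) m n = τhat l m n) (p q r : ℤ) :
    τ p q r = τhat 0 (r + q) (p + r - q) := by
  rw [← eq_apply_zero_of_apply_add_one (g := fun l ↦ τhat l (r + q) (p + r - q))
    (fun l ↦ hred l _ _) (-q), hτhat]
  congr 1 <;> ring

lemma reduced_bilinear_of_bkp {R : Type*} [CommRing R] {z1 z2 z3 z4 : R}
    (τ : ℤ → ℤ → ℤ → R) (f : ℤ → ℤ → R)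
    (hτ : ∀ p q r, τ p q r = f (r + q) (p + r - q))
    (hBKP : ∀ p q r : ℤ,
      z1 * τ (p + 1) q r * τ p (q + 1) (r + 1) + z2 * τ p (q + 1) r * τ (p + 1) q (r + 1) +
      z3 * τ p q (r + 1) * τ (p + 1) (q + 1) r - z4 * τ p q r * τ (p + 1) (q + 1) (r + 1) = 0)
    (m n : ℤ) :
    z4 * f (m - 1) n * f (m + 1) (n + 1) =
      z1 * f (m + 1) n * f (m - 1) (n + 1) + z2 * f m (n - 1) * f m (n + 2) +
      z3 * f m n * f m (n + 1) := by
  have h := hBKP (n - m + 1) 0 (m - 1)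
  simp only [hτ] at h
  ring_nf at h ⊢
  linear_combination -h

theorem stmt_18_general (d1 d2 : ℝ)
    (z1 z2 z3 z4 : ℝ)
    (hz1 : z1 = d1) (hz2 : z2 = d2) (hz3 : z3 = 1 - d2) (hz4 : z4 = 1 + d1)
    (τ : ℤ → ℤ → ℤ → ℂ)
    (hBKP : ∀ p q r : ℤ,
      (z1 : ℂ) * τ (p + 1) q r * τ p (q + 1) (r + 1) +
      (z2 : ℂ) * τ p (q + 1) r * τ (p + 1) q (r + 1) +
      (z3 : ℂ) * τ p q (r + 1) * τ (p + 1) (q + 1) r -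
      (z4 : ℂ) * τ p q r * τ (p + 1) (q + 1) (r + 1) = 0)
    (τhat : ℤ → ℤ → ℤ → ℂ)
    (hτhat : ∀ l m n : ℤ, τhat l m n = τ (n - m - 2 * l) (-l) (m + l))
    (hred : ∀ l m n : ℤ, τhat (l + 1) m n = τhat l m n)
    (f : ℤ → ℤ → ℂ)
    (hf : ∀ m n : ℤ, f m n = τhat 0 m n) :
    ∀ m n : ℤ,
      (1 + (d1 : ℂ)) * f (m - 1) n * f (m + 1) (n + 1) =
        (d1 : ℂ) * f (m + 1) n * f (m - 1) (n + 1) +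
        (d2 : ℂ) * f m (n - 1) * f m (n + 2) +
        (1 - (d2 : ℂ)) * f m n * f m (n + 1) := by
  subst hz1 hz2 hz3 hz4
  have hτ (p q r : ℤ) : τ p q r = f (r + q) (p + r - q) := by
    rw [hf, apply_eq_reduced_of_apply_add_one τ τhat hτhat hred]
  intro m n
  simpa using reduced_bilinear_of_bkp τ f hτ hBKP m n

theorem stmt_18 (d1 d2 : ℝ) (h1 : 0 < d2) (h2 : d2 < d1) (h3 : d1 < 1)
    (z1 z2 z3 z4 : ℝ)
    (hz1 : z1 = d1) (hz2 : z2 = d2) (hz3 : z3 = 1 - d2) (hz4 : z4 = 1 + d1)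
    (τ : ℤ → ℤ → ℤ → ℂ)
    (hBKP : ∀ p q r : ℤ,
      (z1 : ℂ) * τ (p + 1) q r * τ p (q + 1) (r + 1) +
      (z2 : ℂ) * τ p (q + 1) r * τ (p + 1) q (r + 1) +
      (z3 : ℂ) * τ p q (r + 1) * τ (p + 1) (q + 1) r -
      (z4 : ℂ) * τ p q r * τ (p + 1) (q + 1) (r + 1) = 0)
    (τhat : ℤ → ℤ → ℤ → ℂ)
    (hτhat : ∀ l m n : ℤ, τhat l m n = τ (n - m - 2 * l) (-l) (m + l))
    (hred : ∀ l m n : ℤ, τhat (l + 1) m n = τhat l m n)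
    (f : ℤ → ℤ → ℂ)
    (hf : ∀ m n : ℤ, f m n = τhat 0 m n) :
    ∀ m n : ℤ,
      (1 + (d1 : ℂ)) * f (m - 1) n * f (m + 1) (n + 1) =
        (d1 : ℂ) * f (m + 1) n * f (m - 1) (n + 1) +
        (d2 : ℂ) * f m (n - 1) * f m (n + 2) +
        (1 - (d2 : ℂ)) * f m n * f m (n + 1) :=
  stmt_18_general d1 d2 z1 z2 z3 z4 hz1 hz2 hz3 hz4 τ hBKP τhat hτhat hred f hf
end
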